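/- arXiv:1709.08051 — 2 statements merged into one kernel-verified Lean document; each statement's English description precedes it below -/
import Mathlib

section
/- Let (R, ρ, E) be a partial A-comodule algebra over a regular multiplier Hopf algebra A. Then E ρ(x) = ρ(x) and ρ(x) E = ρ(x) for all x ∈ R. -/
/- ## Preliminaries: multiplier algebras and (regular) multiplier Hopf algebras -/

open scoped TensorProduct
open TensorProduct LinearMap
set_option linter.unusedSectionVars false

noncomputable section

variable (k : Type*) [Field k]

section MultiplierAlgebra

variable (A : Type*) [NonUnitalRing A] [Module k A] [SMulCommClass k A A] [IsScalarTower k A A]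

/-- The product of an algebra is *nondegenerate*. -/
def NondegProd : Prop :=
  (∀ a : A, (∀ b : A, a * b = 0) → a = 0) ∧ ∀ b : A, (∀ a : A, a * b = 0) → b = 0

/-- A multiplier of `A`: a pair `(U, V)` of linear maps with `U (a*b) = U a * b`,
`V (a*b) = a * V b` and `V a * b = a * U b`. -/
@[ext] structure Multiplier where
  U : A →ₗ[k] A
  V : A →ₗ[k] A
  U_mul : ∀ a b : A, U (a * b) = U a * b
  V_mul : ∀ a b : A, V (a * b) = a * V b
  compat : ∀ a b : A, V a * b = a * U b

namespace Multiplier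

variable {k A}

instance : Zero (Multiplier k A) := ⟨⟨0, 0, by simp, by simp, by simp⟩⟩
instance : Add (Multiplier k A) :=
  ⟨fun m n => ⟨m.U + n.U, m.V + n.V,
    by simp [m.U_mul, n.U_mul, add_mul],
    by simp [m.V_mul, n.V_mul, mul_add],
    by simp [add_mul, mul_add, m.compat, n.compat]⟩⟩
instance : Neg (Multiplier k A) :=
  ⟨fun m => ⟨-m.U, -m.V, by simp [m.U_mul], by simp [m.V_mul],
    by simp [m.compat]⟩⟩
instance : SMul k (Multiplier k A) :=
  ⟨fun c m => ⟨c • m.U, c • m.V,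
    by simp [m.U_mul, smul_mul_assoc],
    by simp [m.V_mul, mul_smul_comm],
    by simp [smul_mul_assoc, mul_smul_comm, m.compat]⟩⟩

@[simp] lemma zero_U : (0 : Multiplier k A).U = 0 := rfl
@[simp] lemma zero_V : (0 : Multiplier k A).V = 0 := rfl
@[simp] lemma add_U (m n : Multiplier k A) : (m + n).U = m.U + n.U := rfl
@[simp] lemma add_V (m n : Multiplier k A) : (m + n).V = m.V + n.V := rfl
@[simp] lemma neg_U (m : Multiplier k A) : (-m).U = -m.U := rfl
@[simp] lemma neg_V (m : Multiplier k A) : (-m).V = -m.V := rfl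
@[simp] lemma smul_U (c : k) (m : Multiplier k A) : (c • m).U = c • m.U := rfl
@[simp] lemma smul_V (c : k) (m : Multiplier k A) : (c • m).V = c • m.V := rfl

instance : AddCommGroup (Multiplier k A) where
  add_assoc a b c := by ext x <;> simp [add_assoc]
  zero_add a := by ext x <;> simp
  add_zero a := by ext x <;> simp
  add_comm a b := by ext x <;> simp [add_comm]
  neg_add_cancel a := by ext x <;> simp
  nsmul := nsmulRec
  zsmul := zsmulRec

instance : Module k (Multiplier k A) where
  one_smul m := by ext x <;> simp
  mul_smul c d m := by ext x <;> simp [mul_smul]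
  smul_zero c := by ext x <;> simp
  smul_add c m n := by ext x <;> simp
  add_smul c d m := by ext x <;> simp [add_smul]
  zero_smul m := by ext x <;> simp

instance : One (Multiplier k A) := ⟨⟨LinearMap.id, LinearMap.id, by simp, by simp, by simp⟩⟩
instance : Mul (Multiplier k A) :=
  ⟨fun m n => ⟨m.U ∘ₗ n.U, n.V ∘ₗ m.V,
    by simp [n.U_mul, m.U_mul],
    by simp [m.V_mul, n.V_mul],
    by intro a b; simp only [LinearMap.comp_apply]; rw [n.compat, m.compat]⟩⟩

@[simp] lemma one_U : (1 : Multiplier k A).U = LinearMap.id := rfl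
@[simp] lemma one_V : (1 : Multiplier k A).V = LinearMap.id := rfl
@[simp] lemma mul_U (m n : Multiplier k A) : (m * n).U = m.U ∘ₗ n.U := rfl
@[simp] lemma mul_V (m n : Multiplier k A) : (m * n).V = n.V ∘ₗ m.V := rfl

instance : Monoid (Multiplier k A) where
  mul_assoc a b c := by ext x <;> simp
  one_mul a := by ext x <;> simp
  mul_one a := by ext x <;> simp

/-- The canonical map `A → M(A)` given by left and right multiplication. -/
def incl (a : A) : Multiplier k A :=
  ⟨LinearMap.mulLeft k a, LinearMap.mulRight k a,
    fun b c => by simp [mul_assoc], fun b c => by simp [mul_assoc],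
    fun b c => by simp [mul_assoc]⟩

@[simp] lemma incl_U (a b : A) : (incl (k := k) a).U b = a * b := rfl
@[simp] lemma incl_V (a b : A) : (incl (k := k) a).V b = b * a := rfl

/-- The canonical map `A → M(A)` as a linear map. -/
def inclL : A →ₗ[k] Multiplier k A where
  toFun := incl
  map_add' a b := by ext x <;> simp [add_mul, mul_add]
  map_smul' c a := by ext x <;> simp [smul_mul_assoc, mul_smul_comm]

@[simp] lemma inclL_apply (a : A) : (inclL (k := k) a) = incl a := rfl

/-- The `U`-component, as a linear map. -/
def Ulm : Multiplier k A →ₗ[k] A →ₗ[k] A where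
  toFun m := m.U
  map_add' _ _ := rfl
  map_smul' _ _ := rfl

/-- The `V`-component, as a linear map. -/
def Vlm : Multiplier k A →ₗ[k] A →ₗ[k] A where
  toFun m := m.V
  map_add' _ _ := rfl
  map_smul' _ _ := rfl

end Multiplier

end MultiplierAlgebra

section Tensor

variable (R : Type*) [NonUnitalRing R] [Module k R] [SMulCommClass k R R] [IsScalarTower k R R]
variable (A : Type*) [NonUnitalRing A] [Module k A] [SMulCommClass k A A] [IsScalarTower k A A]

/-- The multiplier `1 ⊗ a` of `R ⊗ A`. -/
def oneT (a : A) : Multiplier k (R ⊗[k] A) where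
  U := lTensor R (LinearMap.mulLeft k a)
  V := lTensor R (LinearMap.mulRight k a)
  U_mul u v := by
    induction u with
    | zero => simp
    | add u₁ u₂ h₁ h₂ => simp [add_mul, h₁, h₂]
    | tmul x b =>
      induction v with
      | zero => simp
      | add v₁ v₂ h₁ h₂ => simp [mul_add, h₁, h₂]
      | tmul y c => simp [Algebra.TensorProduct.tmul_mul_tmul, mul_assoc]
  V_mul u v := by
    induction u with
    | zero => simp
    | add u₁ u₂ h₁ h₂ => simp [add_mul, h₁, h₂]
    | tmul x b =>
      induction v with
      | zero => simp
      | add v₁ v₂ h₁ h₂ => simp [mul_add, h₁, h₂]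
      | tmul y c => simp [Algebra.TensorProduct.tmul_mul_tmul, mul_assoc]
  compat u v := by
    induction u with
    | zero => simp
    | add u₁ u₂ h₁ h₂ => simp [add_mul, h₁, h₂]
    | tmul x b =>
      induction v with
      | zero => simp
      | add v₁ v₂ h₁ h₂ => simp only [map_add, mul_add, h₁, h₂]
      | tmul y c => simp [Algebra.TensorProduct.tmul_mul_tmul, mul_assoc]

/-- The multiplier `x ⊗ 1` of `R ⊗ A`. -/
def tOne (x : R) : Multiplier k (R ⊗[k] A) where
  U := rTensor A (LinearMap.mulLeft k x)
  V := rTensor A (LinearMap.mulRight k x)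
  U_mul u v := by
    induction u with
    | zero => simp
    | add u₁ u₂ h₁ h₂ => simp [add_mul, h₁, h₂]
    | tmul y b =>
      induction v with
      | zero => simp
      | add v₁ v₂ h₁ h₂ => simp [mul_add, h₁, h₂]
      | tmul z c => simp [Algebra.TensorProduct.tmul_mul_tmul, mul_assoc]
  V_mul u v := by
    induction u with
    | zero => simp
    | add u₁ u₂ h₁ h₂ => simp [add_mul, h₁, h₂]
    | tmul y b =>
      induction v with
      | zero => simp
      | add v₁ v₂ h₁ h₂ => simp [mul_add, h₁, h₂]
      | tmul z c => simp [Algebra.TensorProduct.tmul_mul_tmul, mul_assoc]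
  compat u v := by
    induction u with
    | zero => simp
    | add u₁ u₂ h₁ h₂ => simp [add_mul, h₁, h₂]
    | tmul y b =>
      induction v with
      | zero => simp
      | add v₁ v₂ h₁ h₂ => simp only [map_add, mul_add, h₁, h₂]
      | tmul z c => simp [Algebra.TensorProduct.tmul_mul_tmul, mul_assoc]

/-- The multiplier `m ⊗ a` of `R ⊗ A`, for `m ∈ M(R)`, `a ∈ A`. -/
def mtensor (m : Multiplier k R) (a : A) : Multiplier k (R ⊗[k] A) where
  U := map m.U (LinearMap.mulLeft k a)
  V := map m.V (LinearMap.mulRight k a)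
  U_mul u v := by
    induction u with
    | zero => simp
    | add u₁ u₂ h₁ h₂ => simp [add_mul, h₁, h₂]
    | tmul y b =>
      induction v with
      | zero => simp
      | add v₁ v₂ h₁ h₂ => simp [mul_add, h₁, h₂]
      | tmul z c => simp [Algebra.TensorProduct.tmul_mul_tmul, mul_assoc, m.U_mul]
  V_mul u v := by
    induction u with
    | zero => simp
    | add u₁ u₂ h₁ h₂ => simp [add_mul, h₁, h₂]
    | tmul y b =>
      induction v with
      | zero => simp
      | add v₁ v₂ h₁ h₂ => simp [mul_add, h₁, h₂]
      | tmul z c => simp [Algebra.TensorProduct.tmul_mul_tmul, mul_assoc, m.V_mul]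
  compat u v := by
    induction u with
    | zero => simp
    | add u₁ u₂ h₁ h₂ => simp [add_mul, h₁, h₂]
    | tmul y b =>
      induction v with
      | zero => simp
      | add v₁ v₂ h₁ h₂ => simp only [map_add, mul_add, h₁, h₂]
      | tmul z c => simp [Algebra.TensorProduct.tmul_mul_tmul, mul_assoc, m.compat]

/-- The multiplier `m ⊗ 1` of `R ⊗ A`, for `m ∈ M(R)`. -/
def mtensorOne (m : Multiplier k R) : Multiplier k (R ⊗[k] A) where
  U := map m.U LinearMap.id
  V := map m.V LinearMap.id
  U_mul u v := by
    induction u with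
    | zero => simp
    | add u₁ u₂ h₁ h₂ => simp [add_mul, h₁, h₂]
    | tmul y b =>
      induction v with
      | zero => simp
      | add v₁ v₂ h₁ h₂ => simp [mul_add, h₁, h₂]
      | tmul z c => simp [Algebra.TensorProduct.tmul_mul_tmul, m.U_mul]
  V_mul u v := by
    induction u with
    | zero => simp
    | add u₁ u₂ h₁ h₂ => simp [add_mul, h₁, h₂]
    | tmul y b =>
      induction v with
      | zero => simp
      | add v₁ v₂ h₁ h₂ => simp [mul_add, h₁, h₂]
      | tmul z c => simp [Algebra.TensorProduct.tmul_mul_tmul, m.V_mul]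
  compat u v := by
    induction u with
    | zero => simp
    | add u₁ u₂ h₁ h₂ => simp [add_mul, h₁, h₂]
    | tmul y b =>
      induction v with
      | zero => simp
      | add v₁ v₂ h₁ h₂ => simp only [map_add, mul_add, h₁, h₂]
      | tmul z c => simp [Algebra.TensorProduct.tmul_mul_tmul, m.compat]

/-- Apply a functional to the second tensor factor:  `x ⊗ a ↦ f a • x`. -/
def apT (f : A →ₗ[k] k) : R ⊗[k] A →ₗ[k] R :=
  (TensorProduct.rid k R).toLinearMap ∘ₗ lTensor R f

@[simp] lemma apT_tmul (f : A →ₗ[k] k) (x : R) (a : A) :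
    apT k R A f (x ⊗ₜ a) = f a • x := rfl

/-- Sum of pure tensors attached to a list of pairs. -/
def psum {M N : Type*} [AddCommGroup M] [Module k M] [AddCommGroup N] [Module k N]
    (l : List (M × N)) : M ⊗[k] N :=
  (l.map fun p => p.1 ⊗ₜ[k] p.2).sum

end Tensor
section MHAdef

variable (A : Type*) [NonUnitalRing A] [Module k A] [SMulCommClass k A A] [IsScalarTower k A A]

/-- Apply a functional to the first tensor factor: `a ⊗ b ↦ f a • b`. -/
def apF (f : A →ₗ[k] k) : A ⊗[k] A →ₗ[k] A :=
  (TensorProduct.lid k A).toLinearMap ∘ₗ rTensor A f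

@[simp] lemma apF_tmul (f : A →ₗ[k] k) (a b : A) : apF k A f (a ⊗ₜ b) = f a • b := rfl

/-- A *regular multiplier Hopf algebra* structure on a nondegenerate algebra `A`:
a comultiplication `Δ : A → M(A ⊗ A)` such that the four Galois-type maps
`T1 : a ⊗ b ↦ Δ(a)(1 ⊗ b)`, `T2 : a ⊗ b ↦ (a ⊗ 1)Δ(b)`, `T3 : a ⊗ b ↦ Δ(a)(b ⊗ 1)`,
`T4 : a ⊗ b ↦ (1 ⊗ b)Δ(a)` are (well-defined and) bijective from `A ⊗ A` onto `A ⊗ A`,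
together with its counit `ε` and (bijective) antipode `S`, subject to the usual axioms
(coassociativity and the counit and antipode laws, in their `T1`/`T2`-covered form). -/
structure MHA where
  nondeg : NondegProd A
  comul : A →ₗ[k] Multiplier k (A ⊗[k] A)
  comul_mul : ∀ a b : A, comul (a * b) = comul a * comul b
  T1 : A ⊗[k] A ≃ₗ[k] A ⊗[k] A
  T2 : A ⊗[k] A ≃ₗ[k] A ⊗[k] A
  T3 : A ⊗[k] A ≃ₗ[k] A ⊗[k] A
  T4 : A ⊗[k] A ≃ₗ[k] A ⊗[k] A
  hT1 : ∀ a b : A, comul a * oneT k A A b = Multiplier.incl (T1 (a ⊗ₜ b))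
  hT2 : ∀ a b : A, tOne k A A a * comul b = Multiplier.incl (T2 (a ⊗ₜ b))
  hT3 : ∀ a b : A, comul a * tOne k A A b = Multiplier.incl (T3 (a ⊗ₜ b))
  hT4 : ∀ a b : A, oneT k A A b * comul a = Multiplier.incl (T4 (a ⊗ₜ b))
  coassoc : ∀ a b c : A,
    (TensorProduct.assoc k A A A)
        ((rTensor A (T2.toLinearMap ∘ₗ TensorProduct.mk k A A a)) (T1 (b ⊗ₜ c)))
      = (lTensor A (T1.toLinearMap ∘ₗ (TensorProduct.mk k A A).flip c)) (T2 (a ⊗ₜ b))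
  counit : A →ₗ[k] k
  counit_mul : ∀ a b : A, counit (a * b) = counit a * counit b
  hcounit1 : ∀ a b : A, apF k A counit (T1 (a ⊗ₜ b)) = a * b
  hcounit2 : ∀ a b : A, apT k A A counit (T2 (a ⊗ₜ b)) = a * b
  S : A ≃ₗ[k] A
  S_antimul : ∀ a b : A, S (a * b) = S b * S a
  hS1 : ∀ a b : A, LinearMap.mul' k A ((rTensor A S.toLinearMap) (T1 (a ⊗ₜ b))) = counit a • b
  hS2 : ∀ a b : A, LinearMap.mul' k A ((lTensor A S.toLinearMap) (T2 (a ⊗ₜ b))) = counit b • a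

end MHAdef

section PComod

variable {k}
variable {A : Type*} [NonUnitalRing A] [Module k A] [SMulCommClass k A A] [IsScalarTower k A A]
variable (H : MHA k A)
variable (R : Type*) [NonUnitalRing R] [Module k R] [SMulCommClass k R R] [IsScalarTower k R R]

/-- `(R, ρ, E)` is a *partial `A`-comodule algebra* (Definition 3.5).  The data
`rmap`/`lmap` records the elements `ρ(x)(1 ⊗ a)` and `(1 ⊗ a)ρ(x)` of `R ⊗ A`.
Condition `c3` is the coassociativity
`(ρ ⊗ ι)(ρ(x)) = (E ⊗ 1)(ι ⊗ Δ)(ρ(x))` in its fully covered form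
`x⁽⁰⁾⁽⁰⁾ ⊗ x⁽⁰⁾⁽¹⁾a ⊗ x⁽¹⁾b = Σᵢ E(x⁽⁰⁾ ⊗ (x⁽¹⁾aᵢ)₍₁₎) ⊗ (x⁽¹⁾aᵢ)₍₂₎bᵢ`
for any representation `Σᵢ aᵢ ⊗ bᵢ = T1⁻¹(a ⊗ b)`. -/
structure IsPComod (ρ : R →ₗ[k] Multiplier k (R ⊗[k] A)) (E : Multiplier k (R ⊗[k] A))
    (rmap : R →ₗ[k] A →ₗ[k] R ⊗[k] A) (lmap : A →ₗ[k] R →ₗ[k] R ⊗[k] A) : Prop where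
  ρ_mul : ∀ x y : R, ρ (x * y) = ρ x * ρ y
  ρ_inj : Function.Injective ρ
  E_idem : E * E = E
  hrmap : ∀ (x : R) (a : A), ρ x * oneT k R A a = Multiplier.incl (rmap x a)
  hlmap : ∀ (a : A) (x : R), oneT k R A a * ρ x = Multiplier.incl (lmap a x)
  c1l : ∀ a : A, ∃ l : List (Multiplier k R × A),
      oneT k R A a * E = (l.map fun p => mtensor k R A p.1 p.2).sum
  c1r : ∀ a : A, ∃ l : List (Multiplier k R × A),
      E * oneT k R A a = (l.map fun p => mtensor k R A p.1 p.2).sum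
  c2l : ∀ (x : R) (a : A), ∃ u : R ⊗[k] A, rmap x a = E.U u
  c2r : ∀ (a : A) (x : R), ∃ u : R ⊗[k] A, lmap a x = E.V u
  c3 : ∀ (x : R) (a b : A) (l : List (A × A)), psum k l = H.T1.symm (a ⊗ₜ b) →
      rTensor A (rmap.flip a) (rmap x b)
        = (l.map fun p => (rTensor A E.U) ((TensorProduct.assoc k R A A).symm
            ((lTensor R (H.T1.toLinearMap ∘ₗ (TensorProduct.mk k A A).flip p.2))
              (rmap x p.1)))).sum

/-- A *symmetric* partial `A`-comodule algebra (Definition 3.5 (iv)):  additionally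
`(ρ ⊗ ι)(ρ(x)) = (ι ⊗ Δ)(ρ(x))(E ⊗ 1)`, in the fully covered form
`x⁽⁰⁾⁽⁰⁾ ⊗ ax⁽⁰⁾⁽¹⁾ ⊗ bx⁽¹⁾ = Σᵢ (x⁽⁰⁾ ⊗ (aᵢx⁽¹⁾)₍₁₎)E ⊗ bᵢ(aᵢx⁽¹⁾)₍₂₎` for any
representation `Σᵢ aᵢ ⊗ bᵢ = T4⁻¹(a ⊗ b)`. -/
structure IsSymPComod (ρ : R →ₗ[k] Multiplier k (R ⊗[k] A)) (E : Multiplier k (R ⊗[k] A))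
    (rmap : R →ₗ[k] A →ₗ[k] R ⊗[k] A) (lmap : A →ₗ[k] R →ₗ[k] R ⊗[k] A)
    extends IsPComod H R ρ E rmap lmap : Prop where
  c4 : ∀ (x : R) (a b : A) (l : List (A × A)), psum k l = H.T4.symm (a ⊗ₜ b) →
      rTensor A (lmap a) (lmap b x)
        = (l.map fun p => (rTensor A E.V) ((TensorProduct.assoc k R A A).symm
            ((lTensor R (H.T4.toLinearMap ∘ₗ (TensorProduct.mk k A A).flip p.2))
              (lmap p.1 x)))).sum

/-- `R` is a (global) right `A`-comodule algebra via `ρ` (Definition 3.1), with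
`rmap`/`lmap` recording `ρ(x)(1 ⊗ a) ∈ R ⊗ A` and `(1 ⊗ a)ρ(x) ∈ R ⊗ A`;
coassociativity `(ρ ⊗ ι)ρ = (ι ⊗ Δ)ρ` is stated in its fully covered form. -/
structure IsComod (ρ : R →ₗ[k] Multiplier k (R ⊗[k] A))
    (rmap : R →ₗ[k] A →ₗ[k] R ⊗[k] A) (lmap : A →ₗ[k] R →ₗ[k] R ⊗[k] A) : Prop where
  ρ_mul : ∀ x y : R, ρ (x * y) = ρ x * ρ y
  ρ_inj : Function.Injective ρ
  hrmap : ∀ (x : R) (a : A), ρ x * oneT k R A a = Multiplier.incl (rmap x a)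
  hlmap : ∀ (a : A) (x : R), oneT k R A a * ρ x = Multiplier.incl (lmap a x)
  coassoc : ∀ (x : R) (a b : A) (l : List (A × A)), psum k l = H.T1.symm (a ⊗ₜ b) →
      rTensor A (rmap.flip a) (rmap x b)
        = (l.map fun p => (TensorProduct.assoc k R A A).symm
            ((lTensor R (H.T1.toLinearMap ∘ₗ (TensorProduct.mk k A A).flip p.2))
              (rmap x p.1))).sum

end PComod
section PMod

variable {k}
variable {A : Type*} [NonUnitalRing A] [Module k A] [SMulCommClass k A A] [IsScalarTower k A A]
variable (H : MHA k A)
variable (R : Type*) [NonUnitalRing R] [Module k R] [SMulCommClass k R R] [IsScalarTower k R R]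

/-- `(R, ⬝, 𝔢)` is a *partial `A`-module algebra* (Definition 4.5).  Sweedler
expressions are stated for arbitrary list representations of the corresponding
covered elements; e.g. condition (i) reads
`a ⬝ (x (b ⬝ y)) = Σᵢ (pᵢ ⬝ x)(qᵢ ⬝ y)` whenever `Σᵢ pᵢ ⊗ qᵢ = Δ(a)(1 ⊗ b) = T1(a ⊗ b)`,
and in (ii) one uses the covering `a₍₁₎ ⊗ S(a₍₂₎)b = (ι ⊗ S)((1 ⊗ S⁻¹(b))Δ(a))`. -/
structure IsPModAlg (act : A →ₗ[k] R →ₗ[k] R) (e : A →ₗ[k] Multiplier k R) : Prop where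
  cond1 : ∀ (a b : A) (x y : R) (l : List (A × A)), psum k l = H.T1 (a ⊗ₜ b) →
      act a (x * act b y) = (l.map fun p => act p.1 x * act p.2 y).sum
  cond2a : ∀ (a b : A) (x : R) (l : List (A × A)), psum k l = H.T4 (a ⊗ₜ H.S.symm b) →
      (e a).U (act b x) = (l.map fun p => act p.1 (act (H.S p.2) x)).sum
  cond2b : ∀ (a : A) (x : R),
      (e a).U x ∈ Submodule.span k {z : R | ∃ (b : A) (y : R), z = act b y}
  cond3 : ∀ (la : List A) (lx : List R), ∃ b : A,
      (∀ a ∈ la, a * b = a ∧ b * a = a) ∧ ∀ a ∈ la, ∀ x ∈ lx, act a x = act a (act b x)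
  cond4 : ∀ x : R, (∀ a : A, act a x = 0) → x = 0

/-- A *symmetric* partial `A`-module algebra (Definition 4.5 (v)-(vii)).  In (vi),
one uses the covering `a₍₂₎ ⊗ S⁻¹(a₍₁₎)b = σ((S⁻¹ ⊗ ι)((S(b) ⊗ 1)Δ(a)))`. -/
structure IsSymPModAlg (act : A →ₗ[k] R →ₗ[k] R) (e : A →ₗ[k] Multiplier k R)
    extends IsPModAlg H R act e : Prop where
  cond5 : ∀ (a b : A) (x y : R) (l : List (A × A)), psum k l = H.T3 (a ⊗ₜ b) →
      act a (act b x * y) = (l.map fun p => act p.1 x * act p.2 y).sum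
  cond6 : ∀ (a b : A) (x : R) (l : List (A × A)), psum k l = H.T2 (H.S b ⊗ₜ a) →
      (e a).V (act b x) = (l.map fun p => act p.2 (act (H.S.symm p.1) x)).sum
  cond7 : ∀ (a : A) (x : R),
      (e a).V x ∈ Submodule.span k {z : R | ∃ (b : A) (y : R), z = act b y}

/-- `R` is a (global, unitary) left `A`-module algebra (Definition 4.1). -/
structure IsModAlg (act : A →ₗ[k] R →ₗ[k] R) : Prop where
  assoc : ∀ (a b : A) (x : R), act a (act b x) = act (a * b) x
  unital : Submodule.span k {z : R | ∃ (a : A) (x : R), z = act a x} = ⊤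
  mul_cond : ∀ (a b : A) (x y : R) (l : List (A × A)), psum k l = H.T1 (a ⊗ₜ b) →
      act a (x * act b y) = (l.map fun p => act p.1 x * act p.2 y).sum

end PMod

section Dual

variable {k}
variable {A : Type*} [NonUnitalRing A] [Module k A] [SMulCommClass k A A] [IsScalarTower k A A]
variable (H : MHA k A)
variable (Ahat : Type*) [NonUnitalRing Ahat] [Module k Ahat] [SMulCommClass k Ahat Ahat]
  [IsScalarTower k Ahat Ahat] (Hh : MHA k Ahat)

/-- A realization of the *dual* `Â = {φ(– a) : a ∈ A}` of a regular multiplier Hopf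
algebra `A` with left integral `φ` (as in (2.1)): a regular multiplier Hopf algebra
`Â` together with the linear bijections `hat : a ↦ φ(– a)` and `hat' : b ↦ φ(b –)`,
the evaluation pairing `ev`, the product rule `(ŵ û)(c) = (w ⊗ u)(Δ c)`, the
coproduct rules (2.5) and (2.6) read through `hat`, and the modular element
`δ ∈ M(A)` of (5.1), `(φ ⊗ ι)Δ(a) = φ(a)δ`. -/
structure DualPair where
  φ : A →ₗ[k] k
  φ_ne : φ ≠ 0
  /-- `(ι ⊗ φ)((b ⊗ 1)Δ(a)) = φ(a) b` : left invariance of the integral. -/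
  φ_int : ∀ a b : A, apT k A A φ (H.T2 (b ⊗ₜ a)) = φ a • b
  /-- `(ι ⊗ φ)(Δ(a)(b ⊗ 1)) = φ(a) b` : left invariance of the integral. -/
  φ_int' : ∀ a b : A, apT k A A φ (H.T3 (a ⊗ₜ b)) = φ a • b
  hat : A ≃ₗ[k] Ahat
  hat' : A ≃ₗ[k] Ahat
  ev : Ahat →ₗ[k] A →ₗ[k] k
  ev_hat : ∀ a x : A, ev (hat a) x = φ (x * a)
  ev_hat' : ∀ b x : A, ev (hat' b) x = φ (b * x)
  /-- the product of `Â`: `(φ(– a) u)(c) = Σ φ(c₍₁₎ a) u(c₍₂₎)`. -/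
  ev_mul : ∀ (a : A) (u : Ahat) (c : A),
      ev (hat a * u) c
        = (TensorProduct.lid k k) ((map φ (ev u)) (H.T3 (c ⊗ₜ a)))
  /-- identity (2.5): `Δ̂(φ(– a))(1 ⊗ φ(– b)) = φ(– S⁻¹(b₍₁₎)a) ⊗ φ(– b₍₂₎)`,
  read through `hat⁻¹ ⊗ hat⁻¹` and covered on the right leg by `c`. -/
  hatT1 : ∀ a b c : A,
      (lTensor A (LinearMap.mulRight k c))
          ((map hat.symm.toLinearMap hat.symm.toLinearMap) (Hh.T1 (hat a ⊗ₜ hat b)))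
        = rTensor A (LinearMap.mulRight k a ∘ₗ H.S.symm.toLinearMap) (H.T1 (b ⊗ₜ c))
  /-- identity (2.6): `(ι ⊗ Ŝ)((1 ⊗ Ŝ⁻¹(φ(– b)))Δ̂(φ(– a))) = φ(– b₍₁₎a) ⊗ φ(– b₍₂₎)`,
  read through `hat⁻¹ ⊗ hat⁻¹` and covered on the right leg by `c`. -/
  hatT2 : ∀ a b c : A,
      (lTensor A (LinearMap.mulRight k c))
          ((map hat.symm.toLinearMap hat.symm.toLinearMap)
            ((lTensor Ahat Hh.S.toLinearMap) (Hh.T4 (hat a ⊗ₜ Hh.S.symm (hat b)))))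
        = rTensor A (LinearMap.mulRight k a) (H.T1 (b ⊗ₜ c))
  /-- the modular element `δ`, with `(φ ⊗ ι)(Δ(a)(1 ⊗ b)) = φ(a) • (δ b)`. -/
  delta : Multiplier k A
  deltaInv : Multiplier k A
  delta_inv : delta * deltaInv = 1 ∧ deltaInv * delta = 1
  hdelta : ∀ a b : A, apF k A φ (H.T1 (a ⊗ₜ b)) = φ a • delta.U b

end Dual

/-! Since `ρ(x)(1 ⊗ a) = E z` for some `z` and `E` is idempotent,
`(E ρ(x))(1 ⊗ a) = E E z = ρ(x)(1 ⊗ a)` for every `a ∈ A`, and symmetrically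
`(1 ⊗ a)(ρ(x) E) = (1 ⊗ a)ρ(x)`. A multiplier of `R ⊗ A` is determined by its products with
all `1 ⊗ a`: on one leg by the nondegeneracy of `A`, on the other because `A = A²`, which the
antipode law `S(a₍₁₎)a₍₂₎b = ε(a)b` provides (if `ε = 0`, the counit law and
nondegeneracy force `A = 0`). -/

theorem TensorProduct.eq_zero_of_forall_lTensor_eq_zero {S M N P I : Type*} [CommRing S]
    [AddCommGroup M] [Module S M] [Module.Free S M] [AddCommGroup N] [Module S N]
    [AddCommGroup P] [Module S P] {g : I → N →ₗ[S] P}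
    (hg : ∀ n, (∀ i, g i n = 0) → n = 0) {d : M ⊗[S] N} (hd : ∀ i, lTensor M (g i) d = 0) : d = 0 := by
  let b := Module.Free.chooseBasis S M
  have he : ∀ i t j, equivFinsuppOfBasisLeft b (lTensor M (g i) t) j
      = g i (equivFinsuppOfBasisLeft b t j) := by
    intro i t j
    induction t with
    | zero => simp
    | add u v hu hv => simp only [map_add, Finsupp.add_apply, hu, hv]
    | tmul m n => simp
  refine (equivFinsuppOfBasisLeft b).injective (Finsupp.ext fun j => hg _ fun i => ?_)
  rw [← he, hd, map_zero, Finsupp.zero_apply]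

namespace MHA

variable {k} {A : Type*} [NonUnitalRing A] [Module k A] [SMulCommClass k A A]
  [IsScalarTower k A A]

theorem mul'_surjective (H : MHA k A) : Function.Surjective (LinearMap.mul' k A) := by
  by_cases hε : H.counit = 0
  · have hA : ∀ c : A, c = 0 := fun c => H.nondeg.1 c fun b => by
      rw [← H.hcounit1, apF, hε, rTensor_zero, comp_zero, LinearMap.zero_apply]
    exact fun c => ⟨0, by rw [map_zero, hA c]⟩
  · obtain ⟨a, ha⟩ : ∃ a, H.counit a ≠ 0 := by
      by_contra! h
      exact hε (LinearMap.ext h)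
    intro c
    refine ⟨(H.counit a)⁻¹ • rTensor A H.S.toLinearMap (H.T1 (a ⊗ₜ c)), ?_⟩
    rw [map_smul, H.hS1, smul_smul, inv_mul_cancel₀ ha, one_smul]

end MHA

namespace Multiplier

variable {k} {A : Type*} [NonUnitalRing A] [Module k A] [SMulCommClass k A A]
  [IsScalarTower k A A]

theorem mul_incl (m : Multiplier k A) (t : A) : m * incl t = incl (m.U t) := by
  ext w
  · exact m.U_mul t w
  · exact m.compat w t

theorem incl_mul (m : Multiplier k A) (t : A) : incl t * m = incl (m.V t) := by
  ext w
  · exact (m.compat t w).symm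
  · exact m.V_mul w t

theorem mul_incl_of_mul_self {E : Multiplier k A} (hE : E * E = E) (t : A) :
    E * incl (E.U t) = incl (E.U t) := by
  rw [← mul_incl, ← mul_assoc, hE]

theorem incl_mul_of_mul_self {E : Multiplier k A} (hE : E * E = E) (t : A) :
    incl (E.V t) * E = incl (E.V t) := by
  rw [← incl_mul, mul_assoc, hE]

variable {R : Type*} [NonUnitalRing R] [Module k R] [SMulCommClass k R R] [IsScalarTower k R R]

theorem eq_of_forall_mul_oneT (hA : NondegProd A) (hmul : Function.Surjective (mul' k A))
    {m n : Multiplier k (R ⊗[k] A)} (h : ∀ a, m * oneT k R A a = n * oneT k R A a) : m = n := by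
  ext1
  · refine (LinearMap.cancel_right (lTensor_surjective R hmul)).mp (ext_threefold' fun y u v => ?_)
    -- `y ⊗ u v = (1 ⊗ u)(y ⊗ v)` definitionally
    exact congrArg (fun p : Multiplier k (R ⊗[k] A) => p.U (y ⊗ₜ v)) (h u)
  · refine LinearMap.ext fun w => sub_eq_zero.mp ?_
    refine TensorProduct.eq_zero_of_forall_lTensor_eq_zero (g := fun a => mulRight k a)
      hA.1 fun a => ?_
    rw [map_sub, sub_eq_zero]
    exact congrArg (fun p : Multiplier k (R ⊗[k] A) => p.V w) (h a)

theorem eq_of_forall_oneT_mul (hA : NondegProd A) (hmul : Function.Surjective (mul' k A))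
    {m n : Multiplier k (R ⊗[k] A)} (h : ∀ a, oneT k R A a * m = oneT k R A a * n) : m = n := by
  ext1
  · refine LinearMap.ext fun w => sub_eq_zero.mp ?_
    refine TensorProduct.eq_zero_of_forall_lTensor_eq_zero (g := fun a => mulLeft k a)
      hA.2 fun a => ?_
    rw [map_sub, sub_eq_zero]
    exact congrArg (fun p : Multiplier k (R ⊗[k] A) => p.U w) (h a)
  · refine (LinearMap.cancel_right (lTensor_surjective R hmul)).mp (ext_threefold' fun y u v => ?_)
    exact congrArg (fun p : Multiplier k (R ⊗[k] A) => p.V (y ⊗ₜ u)) (h v)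

end Multiplier

section Statements
variable {k}
variable {A : Type*} [NonUnitalRing A] [Module k A] [SMulCommClass k A A] [IsScalarTower k A A]
variable {R : Type*} [NonUnitalRing R] [Module k R] [SMulCommClass k R R] [IsScalarTower k R R]

theorem partial_comodule_E_absorbs_general
    (H : MHA k A)
    (ρ : R →ₗ[k] Multiplier k (R ⊗[k] A)) (E : Multiplier k (R ⊗[k] A))
    (rmap : R →ₗ[k] A →ₗ[k] R ⊗[k] A) (lmap : A →ₗ[k] R →ₗ[k] R ⊗[k] A)
    (h : IsPComod H R ρ E rmap lmap) (x : R) :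
    E * ρ x = ρ x ∧ ρ x * E = ρ x := by
  constructor
  · refine Multiplier.eq_of_forall_mul_oneT H.nondeg H.mul'_surjective fun a => ?_
    obtain ⟨z, hz⟩ := h.c2l x a
    rw [mul_assoc, h.hrmap, hz, Multiplier.mul_incl_of_mul_self h.E_idem]
  · refine Multiplier.eq_of_forall_oneT_mul H.nondeg H.mul'_surjective fun a => ?_
    obtain ⟨z, hz⟩ := h.c2r a x
    rw [← mul_assoc, h.hlmap, hz, Multiplier.incl_mul_of_mul_self h.E_idem]

/-- **Lemma 3.7.** Let `(R, ρ, E)` be a partial `A`-comodule algebra over a regular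
multiplier Hopf algebra `A`.  Then `E ρ(x) = ρ(x)` and `ρ(x) E = ρ(x)` for all `x ∈ R`. -/
theorem partial_comodule_E_absorbs
    (H : MHA k A) (hR : NondegProd R)
    (ρ : R →ₗ[k] Multiplier k (R ⊗[k] A)) (E : Multiplier k (R ⊗[k] A))
    (rmap : R →ₗ[k] A →ₗ[k] R ⊗[k] A) (lmap : A →ₗ[k] R →ₗ[k] R ⊗[k] A)
    (h : IsPComod H R ρ E rmap lmap) (x : R) :
    E * ρ x = ρ x ∧ ρ x * E = ρ x :=
  partial_comodule_E_absorbs_general H ρ E rmap lmap h x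

end Statements
end
end

section
/- Let (R, ρ, E) be a partial A-comodule algebra over a regular multiplier Hopf algebra A with counit ε. Then (ι ⊗ ε)ρ(x) = x for all x ∈ R. -/
/- ## Preliminaries: multiplier algebras and (regular) multiplier Hopf algebras -/

open scoped TensorProduct
open TensorProduct LinearMap
set_option linter.unusedSectionVars false

noncomputable section

variable (k : Type*) [Field k]

/-! The proof applies `ι ⊗ ι ⊗ ε` to the covered coassociativity axiom
`x⁽⁰⁾⁽⁰⁾ ⊗ x⁽⁰⁾⁽¹⁾a ⊗ x⁽¹⁾b = Σᵢ E(x⁽⁰⁾ ⊗ (x⁽¹⁾aᵢ)₍₁₎) ⊗ (x⁽¹⁾aᵢ)₍₂₎bᵢ`. Since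
`(ι ⊗ ε)(Δ(c)(1 ⊗ d)) = ε(d) c`, the right side collapses to `E(ρ(x)(1 ⊗ a)) ε(b)`, and `E`
fixes `ρ(x)(1 ⊗ a)`, so `ρ((ι ⊗ ε)(ρ(x)(1 ⊗ b)))(1 ⊗ a) = ε(b) ρ(x)(1 ⊗ a)` for all `a`.
Nondegeneracy of `R ⊗ A` and injectivity of `ρ` then give `(ι ⊗ ε)(ρ(x)(1 ⊗ b)) = ε(b) x`. -/

section Nondegenerate

variable {A : Type*} [NonUnitalRing A]

lemma NondegProd.eq_of_forall_mul_right_eq (hA : NondegProd A) {x y : A}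
    (h : ∀ b, x * b = y * b) : x = y :=
  sub_eq_zero.mp (hA.1 _ fun b => by rw [sub_mul, h, sub_self])

lemma NondegProd.eq_of_forall_mul_left_eq (hA : NondegProd A) {x y : A}
    (h : ∀ a, a * x = a * y) : x = y :=
  sub_eq_zero.mp (hA.2 _ fun a => by rw [mul_sub, h, sub_self])

variable {k}
variable [Module k A] [SMulCommClass k A A] [IsScalarTower k A A]

lemma Multiplier.incl_injective (hA : NondegProd A) :
    Function.Injective (Multiplier.incl (k := k) : A → Multiplier k A) := fun u v h =>
  hA.eq_of_forall_mul_right_eq fun w => by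
    simpa using DFunLike.congr_fun (congrArg Multiplier.U h) w

lemma Multiplier.ext_of_V_eq (hA : NondegProd A) {m n : Multiplier k A} (h : m.V = n.V) :
    m = n := by
  refine Multiplier.ext (LinearMap.ext fun v => hA.eq_of_forall_mul_left_eq fun u => ?_) h
  rw [← m.compat, ← n.compat, h]

end Nondegenerate

section TensorSeparation

variable {k}
variable {ι α M N N' : Type*} [AddCommGroup M] [Module k M] [AddCommGroup N] [Module k N]
  [AddCommGroup N'] [Module k N']

lemma TensorProduct.equivFinsuppOfBasisLeft_lTensor [DecidableEq ι] (b : Module.Basis ι k M)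
    (g : N →ₗ[k] N') (w : M ⊗[k] N) (i : ι) :
    equivFinsuppOfBasisLeft b (lTensor M g w) i = g (equivFinsuppOfBasisLeft b w i) := by
  induction w with
  | zero => simp
  | tmul m n => simp
  | add u v hu hv => simp [hu, hv]

lemma TensorProduct.equivFinsuppOfBasisRight_rTensor [DecidableEq ι] (b : Module.Basis ι k N)
    (g : M →ₗ[k] N') (w : M ⊗[k] N) (i : ι) :
    equivFinsuppOfBasisRight b (rTensor N g w) i = g (equivFinsuppOfBasisRight b w i) := by
  induction w with
  | zero => simp
  | tmul m n => simp
  | add u v hu hv => simp [hu, hv]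

lemma TensorProduct.eq_zero_of_forall_lTensor_eq_zero_s2 (f : α → N →ₗ[k] N')
    (hf : ∀ n, (∀ a, f a n = 0) → n = 0) (w : M ⊗[k] N) (hw : ∀ a, lTensor M (f a) w = 0) :
    w = 0 := by
  classical
  let b := Module.Basis.ofVectorSpace k M
  refine (equivFinsuppOfBasisLeft b).map_eq_zero_iff.mp (Finsupp.ext fun i => hf _ fun a => ?_)
  rw [← equivFinsuppOfBasisLeft_lTensor, hw, map_zero, Finsupp.zero_apply]

lemma TensorProduct.eq_zero_of_forall_rTensor_eq_zero (f : α → M →ₗ[k] N')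
    (hf : ∀ m, (∀ a, f a m = 0) → m = 0) (w : M ⊗[k] N) (hw : ∀ a, rTensor N (f a) w = 0) :
    w = 0 := by
  classical
  let b := Module.Basis.ofVectorSpace k N
  refine (equivFinsuppOfBasisRight b).map_eq_zero_iff.mp (Finsupp.ext fun i => hf _ fun a => ?_)
  rw [← equivFinsuppOfBasisRight_rTensor, hw, map_zero, Finsupp.zero_apply]

end TensorSeparation

section TensorMultipliers

variable {k}
variable {R : Type*} [NonUnitalRing R] [Module k R] [SMulCommClass k R R] [IsScalarTower k R R]
variable {A : Type*} [NonUnitalRing A] [Module k A] [SMulCommClass k A A] [IsScalarTower k A A]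

lemma tmul_mul_eq_rTensor_lTensor (r : R) (a : A) (w : R ⊗[k] A) :
    (r ⊗ₜ[k] a) * w = rTensor A (mulLeft k r) (lTensor R (mulLeft k a) w) := by
  induction w with
  | zero => simp
  | tmul s c => simp [Algebra.TensorProduct.tmul_mul_tmul]
  | add u v hu hv => simp [mul_add, hu, hv]

lemma mul_tmul_eq_rTensor_lTensor (w : R ⊗[k] A) (r : R) (a : A) :
    w * (r ⊗ₜ[k] a) = rTensor A (mulRight k r) (lTensor R (mulRight k a) w) := by
  induction w with
  | zero => simp
  | tmul s c => simp [Algebra.TensorProduct.tmul_mul_tmul]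
  | add u v hu hv => simp [add_mul, hu, hv]

lemma NondegProd.tensorProduct (hR : NondegProd R) (hA : NondegProd A) :
    NondegProd (R ⊗[k] A) := by
  constructor
  · refine fun w h => eq_zero_of_forall_lTensor_eq_zero_s2 (fun a : A => mulRight k a) hA.1 w
      fun a => eq_zero_of_forall_rTensor_eq_zero (fun r : R => mulRight k r) hR.1 _ fun r => ?_
    rw [← mul_tmul_eq_rTensor_lTensor, h]
  · refine fun w h => eq_zero_of_forall_lTensor_eq_zero_s2 (fun a : A => mulLeft k a) hA.2 w
      fun a => eq_zero_of_forall_rTensor_eq_zero (fun r : R => mulLeft k r) hR.2 _ fun r => ?_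
    rw [← tmul_mul_eq_rTensor_lTensor, h]

lemma rTensor_mulLeft_mul (x : R) (u w : R ⊗[k] A) :
    rTensor A (mulLeft k x) (u * w) = rTensor A (mulLeft k x) u * w := by
  induction u with
  | zero => simp
  | add u₁ u₂ h₁ h₂ => simp [add_mul, h₁, h₂]
  | tmul r c =>
    induction w with
    | zero => simp
    | add w₁ w₂ h₁ h₂ => simp [mul_add, h₁, h₂]
    | tmul s d => simp [Algebra.TensorProduct.tmul_mul_tmul, mul_assoc]

lemma rTensor_mulRight_mul (x : R) (u w : R ⊗[k] A) :
    rTensor A (mulRight k x) w * u = w * rTensor A (mulLeft k x) u := by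
  induction u with
  | zero => simp
  | add u₁ u₂ h₁ h₂ => simp [mul_add, h₁, h₂]
  | tmul r c =>
    induction w with
    | zero => simp
    | add w₁ w₂ h₁ h₂ => simp [add_mul, h₁, h₂]
    | tmul s d => simp [Algebra.TensorProduct.tmul_mul_tmul, mul_assoc]

lemma mul_lTensor_mulLeft (a : A) (u w : R ⊗[k] A) :
    u * lTensor R (mulLeft k a) w = lTensor R (mulRight k a) u * w := by
  induction u with
  | zero => simp
  | add u₁ u₂ h₁ h₂ => simp [add_mul, h₁, h₂]
  | tmul r c =>
    induction w with
    | zero => simp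
    | add w₁ w₂ h₁ h₂ => simp [mul_add, h₁, h₂]
    | tmul s d => simp [Algebra.TensorProduct.tmul_mul_tmul, mul_assoc]

lemma lTensor_mulRight_mul (a : A) (u w : R ⊗[k] A) :
    lTensor R (mulRight k a) (w * u) = w * lTensor R (mulRight k a) u := by
  induction u with
  | zero => simp
  | add u₁ u₂ h₁ h₂ => simp [mul_add, h₁, h₂]
  | tmul r c =>
    induction w with
    | zero => simp
    | add w₁ w₂ h₁ h₂ => simp [add_mul, h₁, h₂]
    | tmul s d => simp [Algebra.TensorProduct.tmul_mul_tmul, mul_assoc]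

lemma tOne_mul_incl (x : R) (u : R ⊗[k] A) :
    tOne k R A x * Multiplier.incl u = Multiplier.incl (rTensor A (mulLeft k x) u) :=
  Multiplier.ext (LinearMap.ext fun w => rTensor_mulLeft_mul x u w)
    (LinearMap.ext fun w => rTensor_mulRight_mul x u w)

lemma incl_mul_oneT (u : R ⊗[k] A) (a : A) :
    Multiplier.incl u * oneT k R A a = Multiplier.incl (lTensor R (mulRight k a) u) :=
  Multiplier.ext (LinearMap.ext fun w => mul_lTensor_mulLeft a u w)
    (LinearMap.ext fun w => lTensor_mulRight_mul a u w)

lemma Multiplier.ext_of_mul_oneT (hR : NondegProd R) (hA : NondegProd A)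
    {m n : Multiplier k (R ⊗[k] A)} (h : ∀ a, m * oneT k R A a = n * oneT k R A a) : m = n := by
  refine Multiplier.ext_of_V_eq (hR.tensorProduct hA) (LinearMap.ext fun u => ?_)
  refine sub_eq_zero.mp (eq_zero_of_forall_lTensor_eq_zero_s2 (fun a : A => mulRight k a)
    hA.1 _ fun a => ?_)
  have hV := DFunLike.congr_fun (congrArg Multiplier.V (h a)) u
  simp only [Multiplier.mul_V, LinearMap.comp_apply] at hV
  rwa [map_sub, sub_eq_zero]

end TensorMultipliers

section Counit

variable {k}
variable {A : Type*} [NonUnitalRing A] [Module k A] [SMulCommClass k A A] [IsScalarTower k A A]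

lemma apT_rTensor {M M' : Type*} [NonUnitalRing M] [Module k M] [SMulCommClass k M M]
    [IsScalarTower k M M] [NonUnitalRing M'] [Module k M'] [SMulCommClass k M' M']
    [IsScalarTower k M' M']
    (f : A →ₗ[k] k) (g : M →ₗ[k] M') (u : M ⊗[k] A) :
    apT k M' A f (rTensor A g u) = g (apT k M A f u) := by
  induction u with
  | zero => simp
  | tmul m a => simp
  | add u v hu hv => simp [hu, hv]

lemma apT_lTensor_mulRight (f : A →ₗ[k] k) (hf : ∀ a b : A, f (a * b) = f a * f b)
    (b : A) (u : A ⊗[k] A) :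
    apT k A A f (lTensor A (mulRight k b) u) = f b • apT k A A f u := by
  induction u with
  | zero => simp
  | tmul p q => simp [hf, mul_comm, mul_smul]
  | add u v hu hv => simp [hu, hv]

lemma apT_assoc_symm_lTensor {R : Type*} [NonUnitalRing R] [Module k R] [SMulCommClass k R R]
    [IsScalarTower k R R]
    (f : A →ₗ[k] k) (h : A →ₗ[k] A ⊗[k] A) (u : R ⊗[k] A) :
    apT k (R ⊗[k] A) A f ((TensorProduct.assoc k R A A).symm (lTensor R h u))
      = lTensor R (apT k A A f ∘ₗ h) u := by
  induction u with
  | zero => simp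
  | add u v hu hv => simp [hu, hv]
  | tmul r c =>
    simp only [lTensor_tmul, comp_apply]
    induction h c with
    | zero => simp
    | tmul p q => simp [tmul_smul]
    | add v w hv hw => simp [tmul_add, hv, hw]

lemma exists_psum_eq {M N : Type*} [AddCommGroup M] [Module k M] [AddCommGroup N] [Module k N]
    (u : M ⊗[k] N) : ∃ l : List (M × N), psum k l = u := by
  induction u with
  | zero => exact ⟨[], rfl⟩
  | tmul m n => exact ⟨[(m, n)], by simp [psum]⟩
  | add u v hu hv =>
    obtain ⟨l₁, rfl⟩ := hu
    obtain ⟨l₂, rfl⟩ := hv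
    exact ⟨l₁ ++ l₂, by simp [psum]⟩

lemma map_apT_psum {M : Type*} [AddCommGroup M] [Module k M] (f : A →ₗ[k] k) (g : A →ₗ[k] M)
    (l : List (A × A)) : g (apT k A A f (psum k l)) = (l.map fun p => f p.2 • g p.1).sum := by
  induction l with
  | nil => simp [psum]
  | cons q t ih => simpa [psum] using ih

namespace MHA

variable (H : MHA k A)

/-- Both sides are `(a ⊗ 1)Δ(c)(1 ⊗ b)`. -/
lemma rTensor_mulLeft_T1 (a b c : A) :
    rTensor A (mulLeft k a) (H.T1 (c ⊗ₜ b)) = lTensor A (mulRight k b) (H.T2 (a ⊗ₜ c)) := by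
  apply Multiplier.incl_injective (k := k) (H.nondeg.tensorProduct H.nondeg)
  rw [← tOne_mul_incl, ← incl_mul_oneT, ← H.hT1, ← H.hT2, mul_assoc]

lemma apT_counit_T1 (c b : A) : apT k A A H.counit (H.T1 (c ⊗ₜ b)) = H.counit b • c := by
  refine H.nondeg.eq_of_forall_mul_left_eq fun a => ?_
  calc a * apT k A A H.counit (H.T1 (c ⊗ₜ b))
      = apT k A A H.counit (rTensor A (mulLeft k a) (H.T1 (c ⊗ₜ b))) := by
        rw [apT_rTensor, mulLeft_apply]
    _ = a * (H.counit b • c) := by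
      rw [rTensor_mulLeft_T1, apT_lTensor_mulRight _ H.counit_mul, H.hcounit2, mul_smul_comm]

lemma apT_counit_comp_T1 : apT k A A H.counit ∘ₗ H.T1.toLinearMap = apT k A A H.counit :=
  TensorProduct.ext' fun c b => by simp [apT_counit_T1]

lemma apT_counit_T1_symm (u : A ⊗[k] A) :
    apT k A A H.counit (H.T1.symm u) = apT k A A H.counit u := by
  simpa using (LinearMap.congr_fun H.apT_counit_comp_T1 (H.T1.symm u)).symm

end MHA

end Counit

namespace IsPComod

variable {k}
variable {A : Type*} [NonUnitalRing A] [Module k A] [SMulCommClass k A A] [IsScalarTower k A A]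
variable {R : Type*} [NonUnitalRing R] [Module k R] [SMulCommClass k R R] [IsScalarTower k R R]
variable {H : MHA k A} {ρ : R →ₗ[k] Multiplier k (R ⊗[k] A)} {E : Multiplier k (R ⊗[k] A)}
  {rmap : R →ₗ[k] A →ₗ[k] R ⊗[k] A} {lmap : A →ₗ[k] R →ₗ[k] R ⊗[k] A}

lemma E_U_rmap (h : IsPComod H R ρ E rmap lmap) (x : R) (a : A) :
    E.U (rmap x a) = rmap x a := by
  obtain ⟨u, hu⟩ := h.c2l x a
  rw [hu, ← LinearMap.comp_apply, ← Multiplier.mul_U, h.E_idem]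

lemma rmap_apT_counit (h : IsPComod H R ρ E rmap lmap) (x : R) (a b : A) :
    rmap (apT k R A H.counit (rmap x b)) a = H.counit b • rmap x a := by
  obtain ⟨l, hl⟩ := exists_psum_eq (H.T1.symm (a ⊗ₜ[k] b))
  have hε : ∀ d : A, apT k A A H.counit ∘ₗ H.T1.toLinearMap ∘ₗ (TensorProduct.mk k A A).flip d
      = H.counit d • LinearMap.id :=
    fun d => LinearMap.ext fun c => by simp [MHA.apT_counit_T1]
  have hc3 := congrArg (apT k (R ⊗[k] A) A H.counit) (h.c3 x a b l hl)
  simp only [apT_rTensor, map_list_sum, List.map_map, Function.comp_def, apT_assoc_symm_lTensor,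
    hε, LinearMap.lTensor_smul, lTensor_id, LinearMap.smul_apply, LinearMap.id_apply] at hc3
  calc rmap (apT k R A H.counit (rmap x b)) a
      = (l.map fun p => H.counit p.2 • (E.U ∘ₗ rmap x) p.1).sum := by
        simpa [map_smul] using hc3
    _ = H.counit b • rmap x a := by
        rw [← map_apT_psum, hl, H.apT_counit_T1_symm, apT_tmul, map_smul, comp_apply, E_U_rmap h]

lemma eq_of_forall_rmap_eq (h : IsPComod H R ρ E rmap lmap) (hR : NondegProd R) {y z : R}
    (hyz : ∀ a, rmap y a = rmap z a) : y = z :=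
  h.ρ_inj (Multiplier.ext_of_mul_oneT hR H.nondeg fun a => by rw [h.hrmap, h.hrmap, hyz])

end IsPComod

section Statements
variable {k}
variable {A : Type*} [NonUnitalRing A] [Module k A] [SMulCommClass k A A] [IsScalarTower k A A]
variable {R : Type*} [NonUnitalRing R] [Module k R] [SMulCommClass k R R] [IsScalarTower k R R]

/-- **Proposition 3.10.** If `(R, ρ, E)` is a partial `A`-comodule algebra over a regular
multiplier Hopf algebra `A` with counit `ε`, then `(ι ⊗ ε)ρ(x) = x` for all `x ∈ R`;
in covered form, `(ι ⊗ ε)(ρ(x)(1 ⊗ b)) = ε(b) x` for every `b ∈ A`. -/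
theorem partial_comodule_counit
    (H : MHA k A) (hR : NondegProd R)
    (ρ : R →ₗ[k] Multiplier k (R ⊗[k] A)) (E : Multiplier k (R ⊗[k] A))
    (rmap : R →ₗ[k] A →ₗ[k] R ⊗[k] A) (lmap : A →ₗ[k] R →ₗ[k] R ⊗[k] A)
    (h : IsPComod H R ρ E rmap lmap) :
    ∀ (x : R) (b : A), apT k R A H.counit (rmap x b) = H.counit b • x := fun x b =>
  h.eq_of_forall_rmap_eq hR fun a => by
    rw [h.rmap_apT_counit, map_smul, LinearMap.smul_apply]

end Statements
end
end
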